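/- arXiv:1305.7307 — 7 statements merged into one kernel-verified Lean document; each statement's English description precedes it below -/
import Mathlib

section
/- If M is a sublattice of an integral lattice L such that 2L ⊆ M + ann_L(M) (where ann_L(M) = {x ∈ L : ⟨x, m⟩ = 0 for all m ∈ M}), then the orthogonal transformation t_M that is -1 on M ⊗ ℝ and +1 on its orthogonal complement maps L to L, i.e., t_M is an isometry of L. -/
/-!
Write `2x = m + a` with `m ∈ M` and `a ⟂ M`. Since `T` negates `m` and fixes `a`,
`2 T x = a - m = 2x - 2m`, so `T x = x - m`, which lies in `L` because `M ≤ L`.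
-/

open scoped RealInnerProductSpace

theorem LinearMap.apply_eq_sub_of_two_smul_eq_add {𝕜 E : Type*} [DivisionRing 𝕜] [CharZero 𝕜]
    [AddCommGroup E] [Module 𝕜 E] (T : E →ₗ[𝕜] E) {x m a : E}
    (hm : T m = -m) (ha : T a = a) (h : (2 : ℤ) • x = m + a) : T x = x - m := by
  have h2 : (2 : 𝕜) • x = m + a := by rw [← h, two_smul, two_smul]
  refine smul_right_injective E (two_ne_zero (α := 𝕜)) ?_
  calc (2 : 𝕜) • T x = T m + T a := by rw [← map_smul, h2, map_add]
    _ = (2 : 𝕜) • (x - m) := by rw [hm, ha, smul_sub, h2, two_smul]; abel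

theorem Submodule.mem_orthogonal_span_of_forall_inner_eq_zero {𝕜 E : Type*} [RCLike 𝕜]
    [NormedAddCommGroup E] [InnerProductSpace 𝕜 E] {s : Set E} {a : E}
    (h : ∀ y ∈ s, inner 𝕜 a y = 0) : a ∈ (span 𝕜 s)ᗮ :=
  isOrtho_span.2 (fun _ hu y hy => Set.mem_singleton_iff.1 hu ▸ h y hy) (mem_span_singleton_self a)

theorem rssd_involution_preserves_lattice_general
    {V : Type*} [NormedAddCommGroup V] [InnerProductSpace ℝ V]
    (L M : Submodule ℤ V) (hML : M ≤ L)
    (T : V →ₗ[ℝ] V)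
    (hTneg : ∀ x ∈ Submodule.span ℝ (M : Set V), T x = -x)
    (hTpos : ∀ x ∈ (Submodule.span ℝ (M : Set V))ᗮ, T x = x)
    (hRSSD : ∀ x ∈ L, ∃ m ∈ M, ∃ a ∈ L,
        (∀ y ∈ M, ⟪a, y⟫ = 0) ∧ (2 : ℤ) • x = m + a) :
    ∀ x ∈ L, T x ∈ L := by
  intro x hx
  obtain ⟨m, hm, a, -, ha, hsplit⟩ := hRSSD x hx
  have hTm : T m = -m := hTneg m (Submodule.subset_span hm)
  have hTa : T a = a := hTpos a (Submodule.mem_orthogonal_span_of_forall_inner_eq_zero ha)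
  rw [T.apply_eq_sub_of_two_smul_eq_add hTm hTa hsplit]
  exact L.sub_mem hx (hML hm)

/-- **RSSD implies the involution preserves the lattice.**
If `M` is a sublattice of an integral lattice `L` with `2L ⊆ M + ann_L(M)`,
then the orthogonal map `T` which is `-1` on the real span of `M` and `+1` on its
orthogonal complement maps `L` into `L`. -/
theorem rssd_involution_preserves_lattice
    {V : Type*} [NormedAddCommGroup V] [InnerProductSpace ℝ V]
    [FiniteDimensional ℝ V]
    (L M : Submodule ℤ V) (hML : M ≤ L)
    (hInt : ∀ x ∈ L, ∀ y ∈ L, ∃ n : ℤ, ⟪x, y⟫ = (n : ℝ))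
    (T : V →ₗ[ℝ] V)
    (hTneg : ∀ x ∈ Submodule.span ℝ (M : Set V), T x = -x)
    (hTpos : ∀ x ∈ (Submodule.span ℝ (M : Set V))ᗮ, T x = x)
    (hRSSD : ∀ x ∈ L, ∃ m ∈ M, ∃ a ∈ L,
        (∀ y ∈ M, ⟪a, y⟫ = 0) ∧ (2 : ℤ) • x = m + a) :
    ∀ x ∈ L, T x ∈ L :=
  rssd_involution_preserves_lattice_general L M hML T hTneg hTpos hRSSD
end

section
/- If M is a sublattice of an integral lattice L satisfying the SSD condition 2M* ⊆ M (where M* is the dual lattice of M inside the rational span of M), then M is RSSD in L, i.e., 2L ⊆ M + ann_L(M). -/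
open scoped RealInnerProductSpace

/-!
Let `p` be the orthogonal projection of `x ∈ L` onto the real span of `M`. Pairing with `M` does
not see the component `x - p`, so `⟪p, m⟫ = ⟪x, m⟫ ∈ ℤ` for `m ∈ M`: `p` lies in `M*`, hence
`2p ∈ M` by SSD. Then `2x = 2p + 2(x - p)`, where `2(x - p) = 2x - 2p` lies in `L` and is
orthogonal to `M`.
-/

theorem Submodule.inner_starProjection_left_of_mem {𝕜 E : Type*} [RCLike 𝕜]
    [NormedAddCommGroup E] [InnerProductSpace 𝕜 E] (K : Submodule 𝕜 E) [K.HasOrthogonalProjection]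
    (x : E) {y : E} (hy : y ∈ K) : inner 𝕜 (K.starProjection x) y = inner 𝕜 x y := by
  have h := K.starProjection_inner_eq_zero x y hy
  rwa [inner_sub_left, sub_eq_zero, eq_comm] at h

/-- **SSD implies RSSD.**
If `M` is a sublattice of an integral lattice `L` and `2M* ⊆ M`
(where `M*` is the dual lattice of `M` inside the rational/real span of `M`),
then `2L ⊆ M + ann_L(M)`. -/
theorem ssd_implies_rssd
    {V : Type*} [NormedAddCommGroup V] [InnerProductSpace ℝ V]
    [FiniteDimensional ℝ V]
    (L M : Submodule ℤ V) (hML : M ≤ L)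
    (hInt : ∀ x ∈ L, ∀ y ∈ L, ∃ n : ℤ, ⟪x, y⟫ = (n : ℝ))
    (hSSD : ∀ x ∈ Submodule.span ℝ (M : Set V),
        (∀ m ∈ M, ∃ n : ℤ, ⟪x, m⟫ = (n : ℝ)) → (2 : ℝ) • x ∈ M) :
    ∀ x ∈ L, ∃ m ∈ M, ∃ a ∈ L,
      (∀ y ∈ M, ⟪a, y⟫ = 0) ∧ (2 : ℤ) • x = m + a := by
  intro x hx
  set K := Submodule.span ℝ (M : Set V)
  set p := K.starProjection x
  have hp : ∀ y ∈ M, ⟪p, y⟫ = ⟪x, y⟫ := fun y hy ↦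
    K.inner_starProjection_left_of_mem x (Submodule.subset_span hy)
  have h2p : (2 : ℝ) • p ∈ M := by
    refine hSSD p (K.starProjection_apply_mem x) fun y hy ↦ ?_
    rw [hp y hy]
    exact hInt x hx y (hML hy)
  refine ⟨(2 : ℝ) • p, h2p, (2 : ℤ) • x - (2 : ℝ) • p,
    L.sub_mem (L.smul_mem 2 hx) (hML h2p), fun y hy ↦ ?_, (add_sub_cancel _ _).symm⟩
  rw [inner_sub_left, ← Int.cast_smul_eq_zsmul ℝ, real_inner_smul_left, real_inner_smul_left,
    hp y hy]
  simp
end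

section
/- Let X = E₈ ⊥ ⋯ ⊥ E₈ (n orthogonal copies) with injections ι_i : E₈ → X onto the i-th copy, and set ν_{i,j} = ι_i − ι_j. Then the sublattice 𝒜_{n−1} of X spanned over ℤ by {ν_{i,j}(α) : α ∈ E₈, 1 ≤ i < j ≤ n} is isometric to the tensor product lattice A_{n−1} ⊗ E₈. -/
/-! The map `x ⊗ α ↦ (i ↦ xᵢ • α)` from `A_{n-1} ⊗ M` to `Mⁿ` carries the tensor product of
the dot product with any bilinear form `B` on `M` to the orthogonal sum `B ⊥ ⋯ ⊥ B`. It sends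
`(εᵢ - εⱼ) ⊗ α` to `νᵢⱼ(α)`, so its image is `𝒜_{n-1}`, and it is injective because `A_{n-1}` is
spanned by the `εᵢ - ε₀`, which yields the left inverse `z ↦ ∑ᵢ (εᵢ - ε₀) ⊗ zᵢ`. -/

open TensorProduct

/-- The Cartan matrix of `E₈` (Bourbaki numbering), the Gram matrix of the `E₈` root
lattice in a basis of simple roots. -/
def cartanE8 : Matrix (Fin 8) (Fin 8) ℤ :=
  !![2, 0, -1, 0, 0, 0, 0, 0;
     0, 2, 0, -1, 0, 0, 0, 0;
     -1, 0, 2, -1, 0, 0, 0, 0;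
     0, -1, -1, 2, -1, 0, 0, 0;
     0, 0, 0, -1, 2, -1, 0, 0;
     0, 0, 0, 0, -1, 2, -1, 0;
     0, 0, 0, 0, 0, -1, 2, -1;
     0, 0, 0, 0, 0, 0, -1, 2]

/-- The `E₈` bilinear form on `ℤ⁸` (coordinates in a basis of simple roots). -/
noncomputable def bE8 : LinearMap.BilinForm ℤ (Fin 8 → ℤ) :=
  Matrix.toLinearMap₂' ℤ cartanE8

/-- The root lattice `A_{n-1}`: sum-zero integer vectors in `ℤⁿ` (standard dot product). -/
def sumZeroLattice (n : ℕ) : Submodule ℤ (Fin n → ℤ) where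
  carrier := {x | ∑ i, x i = 0}
  add_mem' := by
    intro a b ha hb
    simp only [Set.mem_setOf_eq, Pi.add_apply, Finset.sum_add_distrib] at *
    simp [ha, hb]
  zero_mem' := by simp
  smul_mem' := by
    intro c x hx
    simp only [Set.mem_setOf_eq, Pi.smul_apply, smul_eq_mul, ← Finset.mul_sum] at *
    simp [hx]

/-- The standard dot product on `ℤⁿ`, restricted to the `A_{n-1}` lattice. -/
noncomputable def bAn (n : ℕ) : LinearMap.BilinForm ℤ ↥(sumZeroLattice n) :=
  (Matrix.toLinearMap₂' ℤ (1 : Matrix (Fin n) (Fin n) ℤ)).compl₁₂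
    (sumZeroLattice n).subtype (sumZeroLattice n).subtype

/-- `𝒜_{n-1} = span_ℤ { ν_{i,j}(α) = ι_i(α) - ι_j(α) : α ∈ E₈, i < j }` inside
`X = E₈ ⊥ ⋯ ⊥ E₈` (`n` copies). -/
def calA (n : ℕ) : Submodule ℤ (Fin n → Fin 8 → ℤ) :=
  Submodule.span ℤ
    {z | ∃ α : Fin 8 → ℤ, ∃ i j : Fin n, i < j ∧ z = Pi.single i α - Pi.single j α}

namespace sumZeroLattice

variable {n : ℕ}

def singleSub (i j : Fin n) : sumZeroLattice n :=
  ⟨Pi.single i 1 - Pi.single j 1, by simp [sumZeroLattice, Finset.sum_sub_distrib]⟩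

@[simp]
lemma coe_singleSub (i j : Fin n) :
    (singleSub i j : Fin n → ℤ) = Pi.single i 1 - Pi.single j 1 := rfl

lemma sum_smul_singleSub (x : sumZeroLattice n) (j : Fin n) :
    ∑ i, (x : Fin n → ℤ) i • singleSub i j = x := by
  have hx : ∑ i, (x : Fin n → ℤ) i = 0 := x.2
  ext k
  simp [Finset.sum_apply, Pi.single_apply, mul_sub, Finset.sum_sub_distrib, hx]

lemma sum_smul_singleSub_zero (x : sumZeroLattice n) :
    ∑ i, (x : Fin n → ℤ) i • singleSub i ⟨0, i.pos⟩ = x := by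
  cases n with
  | zero => exact Subsingleton.elim _ _
  | succ n => exact sum_smul_singleSub x 0

end sumZeroLattice

open sumZeroLattice

section

variable {M : Type*} [AddCommGroup M] {n : ℕ}

variable (M n) in
noncomputable def sumZeroTensorToPi : sumZeroLattice n ⊗[ℤ] M →ₗ[ℤ] Fin n → M :=
  TensorProduct.lift <| LinearMap.mk₂ ℤ (fun x α i => (x : Fin n → ℤ) i • α)
    (fun _ _ _ => by ext; simp [add_smul]) (fun _ _ _ => by ext; simp [mul_smul])
    (fun _ _ _ => by ext; simp) (fun c x α => by ext i; exact smul_comm (x.1 i) c α)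

@[simp]
lemma sumZeroTensorToPi_tmul (x : sumZeroLattice n) (α : M) :
    sumZeroTensorToPi M n (x ⊗ₜ α) = fun i => (x : Fin n → ℤ) i • α :=
  rfl

lemma sumZeroTensorToPi_singleSub_tmul (i j : Fin n) (α : M) :
    sumZeroTensorToPi M n (singleSub i j ⊗ₜ α) = Pi.single i α - Pi.single j α := by
  ext k
  simp [Pi.single_apply, sub_smul]

-- The anchor `ε₀` is written `⟨0, i.pos⟩` so that `n = 0` needs no separate treatment.
variable (M n) in
noncomputable def piToSumZeroTensor : (Fin n → M) →ₗ[ℤ] sumZeroLattice n ⊗[ℤ] M where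
  toFun z := ∑ i, singleSub i ⟨0, i.pos⟩ ⊗ₜ z i
  map_add' z w := by simp only [Pi.add_apply, tmul_add, Finset.sum_add_distrib]
  map_smul' c z := by simp only [Pi.smul_apply, tmul_smul, Finset.smul_sum, RingHom.id_apply]

lemma piToSumZeroTensor_sumZeroTensorToPi (t : sumZeroLattice n ⊗[ℤ] M) :
    piToSumZeroTensor M n (sumZeroTensorToPi M n t) = t := by
  induction t using TensorProduct.induction_on with
  | zero => simp only [map_zero]
  | add t t' ht ht' => rw [map_add, map_add, ht, ht']
  | tmul x α =>
    calc ∑ i, singleSub i ⟨0, i.pos⟩ ⊗ₜ ((x : Fin n → ℤ) i • α)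
        = (∑ i, (x : Fin n → ℤ) i • singleSub i ⟨0, i.pos⟩) ⊗ₜ α := by
          simp only [sum_tmul, smul_tmul]
      _ = x ⊗ₜ α := by rw [sum_smul_singleSub_zero]

lemma sumZeroTensorToPi_injective : Function.Injective (sumZeroTensorToPi M n) :=
  Function.LeftInverse.injective piToSumZeroTensor_sumZeroTensorToPi

-- `𝒜_{n-1}` with `E₈` replaced by `M`; `calA n` is `piDiffSpan (Fin 8 → ℤ) n` by definition.
variable (M n) in
def piDiffSpan : Submodule ℤ (Fin n → M) :=
  Submodule.span ℤ {z | ∃ α : M, ∃ i j : Fin n, i < j ∧ z = Pi.single i α - Pi.single j α}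

lemma single_sub_single_mem_piDiffSpan (i j : Fin n) (α : M) :
    Pi.single i α - Pi.single j α ∈ piDiffSpan M n := by
  rcases lt_trichotomy i j with h | rfl | h
  · exact Submodule.subset_span ⟨α, i, j, h, rfl⟩
  · simp only [sub_self, zero_mem]
  · rw [← neg_sub]
    exact neg_mem (Submodule.subset_span ⟨α, j, i, h, rfl⟩)

lemma range_sumZeroTensorToPi : LinearMap.range (sumZeroTensorToPi M n) = piDiffSpan M n := by
  apply le_antisymm
  · rintro _ ⟨t, rfl⟩
    induction t using TensorProduct.induction_on with
    | zero => simp only [map_zero, zero_mem]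
    | add t t' ht ht' => rw [map_add]; exact add_mem ht ht'
    | tmul x α =>
      rw [← sum_smul_singleSub_zero x, sum_tmul, map_sum]
      refine Submodule.sum_mem _ fun i _ => ?_
      rw [← smul_tmul', map_smul, sumZeroTensorToPi_singleSub_tmul]
      exact Submodule.smul_mem _ _ (single_sub_single_mem_piDiffSpan _ _ α)
  · rw [piDiffSpan, Submodule.span_le]
    rintro _ ⟨α, i, j, -, rfl⟩
    exact ⟨singleSub i j ⊗ₜ α, sumZeroTensorToPi_singleSub_tmul i j α⟩

lemma bAn_apply (x y : sumZeroLattice n) :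
    bAn n x y = ∑ i, (x : Fin n → ℤ) i * (y : Fin n → ℤ) i := by
  simp [bAn, Matrix.toLinearMap₂'_apply, Matrix.one_apply]

lemma sum_bilin_sumZeroTensorToPi_eq_tmul (B : LinearMap.BilinForm ℤ M)
    (u v : sumZeroLattice n ⊗[ℤ] M) :
    ∑ i, B (sumZeroTensorToPi M n u i) (sumZeroTensorToPi M n v i) = (bAn n).tmul B u v := by
  induction u using TensorProduct.induction_on with
  | zero => simp
  | add a b ha hb =>
    simp only [map_add, Pi.add_apply, LinearMap.add_apply, Finset.sum_add_distrib, ha, hb]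
  | tmul x α =>
    induction v using TensorProduct.induction_on with
    | zero => simp
    | add a b ha hb => simp only [map_add, Pi.add_apply, Finset.sum_add_distrib, ha, hb]
    | tmul y β =>
      simp only [sumZeroTensorToPi_tmul, LinearMap.BilinForm.tensorDistrib_tmul, bAn_apply,
        map_smul, LinearMap.smul_apply, smul_eq_mul, Finset.mul_sum]
      exact Finset.sum_congr rfl fun i _ => by ring

variable (M n) in
noncomputable def sumZeroTensorEquivPiDiffSpan : (sumZeroLattice n ⊗[ℤ] M) ≃ₗ[ℤ] piDiffSpan M n :=
  LinearEquiv.ofInjective _ sumZeroTensorToPi_injective ≪≫ₗ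
    LinearEquiv.ofEq _ _ range_sumZeroTensorToPi

end

/-- **`𝒜_{n-1} ≅ A_{n-1} ⊗ E₈`.** There is a `ℤ`-linear isometry from the tensor product
lattice `A_{n-1} ⊗ E₈` onto the sublattice `𝒜_{n-1}` of `E₈ ⊥ ⋯ ⊥ E₈`. -/
theorem calA_isometric_An_tensor_E8 (n : ℕ) :
    ∃ f : (↥(sumZeroLattice n) ⊗[ℤ] (Fin 8 → ℤ)) ≃ₗ[ℤ] ↥(calA n),
      ∀ u v, (∑ i, bE8 ((f u : Fin n → Fin 8 → ℤ) i) ((f v : Fin n → Fin 8 → ℤ) i))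
        = (LinearMap.BilinForm.tmul (bAn n) bE8) u v :=
  ⟨sumZeroTensorEquivPiDiffSpan (Fin 8 → ℤ) n, sum_bilin_sumZeroTensorToPi_eq_tmul bE8⟩
end

section
/- Let X = E₈⁸ (8 orthogonal copies of E₈), d = ι_1 + ⋯ + ι_8, and 𝒟₈ the D₈ ⊗ E₈ sublattice spanned by {ν_{i,j}(α), μ_{i,j}(α)}. Then the lattice ℰ₈ = span_ℤ{𝒟₈, (1/2)d(E₈)} ⊂ (1/2)X is isometric to E₈ ⊗ E₈, and ℰ₈ is an even unimodular lattice of rank 64. -/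
open TensorProduct

/-- The Cartan matrix of `E₈` (Bourbaki numbering) over `ℚ`. -/
def cartanE8Q : Matrix (Fin 8) (Fin 8) ℚ :=
  !![2, 0, -1, 0, 0, 0, 0, 0;
     0, 2, 0, -1, 0, 0, 0, 0;
     -1, 0, 2, -1, 0, 0, 0, 0;
     0, -1, -1, 2, -1, 0, 0, 0;
     0, 0, 0, -1, 2, -1, 0, 0;
     0, 0, 0, 0, -1, 2, -1, 0;
     0, 0, 0, 0, 0, -1, 2, -1;
     0, 0, 0, 0, 0, 0, -1, 2]

/-- The `E₈` bilinear form on `ℚ⁸` (coordinates in a basis of simple roots). -/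
noncomputable def bE8Q : LinearMap.BilinForm ℚ (Fin 8 → ℚ) :=
  Matrix.toLinearMap₂' ℚ cartanE8Q

/-- A vector of `ℚ⁸` lies in the `E₈` lattice iff all its coordinates (in the simple
root basis) are integers. -/
def IsIntVec (x : Fin 8 → ℚ) : Prop := ∀ k, ∃ m : ℤ, x k = (m : ℚ)

/-- The orthogonal form on `X = E₈ ⊥ ⋯ ⊥ E₈` (8 copies), rationalized. -/
noncomputable def bX8 (x y : Fin 8 → Fin 8 → ℚ) : ℚ := ∑ i, bE8Q (x i) (y i)

/-- `𝒟₈ = span_ℤ { ν_{i,j}(α), μ_{i,j}(α) : α ∈ E₈, i < j } ⊆ ℚ ⊗ X`. -/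
def calD8 : Submodule ℤ (Fin 8 → Fin 8 → ℚ) :=
  Submodule.span ℤ
    {z | ∃ α : Fin 8 → ℚ, IsIntVec α ∧ ∃ i j : Fin 8, i < j ∧
      (z = Pi.single i α - Pi.single j α ∨ z = Pi.single i α + Pi.single j α)}

/-- `ℰ₈ = span_ℤ { 𝒟₈, (1/2)d(E₈) } ⊂ (1/2)X`, where
`(1/2)d(α) = (α/2, …, α/2)`. -/
def calE8 : Submodule ℤ (Fin 8 → Fin 8 → ℚ) :=
  calD8 ⊔ Submodule.span ℤ
    {z | ∃ α : Fin 8 → ℚ, IsIntVec α ∧ z = fun _ => (1/2 : ℚ) • α}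

/-!
Let `αₜ` be the simple roots of `E₈` in the coordinates of `ℚ⁸` in which
`E₈ = D₈ ∪ (D₈ + (1/2, …, 1/2))`, and `εₖ` those of the second copy, in root coordinates.
Identifying the ambient space of `X` with `ℚ⁸ ⊗ ℚ⁸` (the copy index being the first factor), the
generators of `ℰ₈` are the tensors `v ⊗ α` with `v` one of `e_i ± e_j`, `(1/2, …, 1/2)` and
`α ∈ E₈`. Hence `ℰ₈ = E₈ ⊗ E₈`, with `ℤ`-basis `αₜ ⊗ εₖ` and Gram matrix `C ⊗ C`, `C` the Cartan
matrix. Since `C` has even diagonal and an integral inverse, so does `C ⊗ C`: `ℰ₈` is even and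
unimodular.
-/

open Submodule Module Matrix
open scoped Kronecker

namespace LinearMap.BilinForm

variable {ι V : Type*} [AddCommGroup V] [Module ℚ V] (B : LinearMap.BilinForm ℚ V)

lemma span_le_dualSubmodule_of_gram (b : ι → V) (G : Matrix ι ι ℤ)
    (hG : ∀ i j, B (b i) (b j) = G i j) :
    span ℤ (Set.range b) ≤ B.dualSubmodule (span ℤ (Set.range b)) := by
  have hrow : ∀ i,
      span ℤ (Set.range b) ≤ (1 : Submodule ℤ ℚ).comap ((B (b i)).restrictScalars ℤ) :=
    fun i => span_le.mpr <| by
      rintro _ ⟨j, rfl⟩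
      exact mem_one.mpr ⟨G i j, by simp [hG]⟩
  exact span_le.mpr <| by
    rintro _ ⟨i, rfl⟩ y hy
    exact hrow i hy

lemma exists_apply_self_eq_two_mul_of_mem_span (hB : B.IsSymm) (b : ι → V) (G : Matrix ι ι ℤ)
    (hG : ∀ i j, B (b i) (b j) = G i j) (hdiag : ∀ i, Even (G i i)) {x : V}
    (hx : x ∈ span ℤ (Set.range b)) : ∃ m : ℤ, B x x = 2 * m := by
  induction hx using span_induction with
  | mem _ hs =>
    obtain ⟨i, rfl⟩ := hs
    obtain ⟨m, hm⟩ := hdiag i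
    exact ⟨m, by rw [hG, hm]; push_cast; ring⟩
  | zero => exact ⟨0, by simp⟩
  | add x y hx hy ihx ihy =>
    obtain ⟨a, ha⟩ := ihx
    obtain ⟨c, hc⟩ := ihy
    obtain ⟨d, hd⟩ := mem_one.mp (B.span_le_dualSubmodule_of_gram b G hG hx y hy)
    refine ⟨a + c + d, ?_⟩
    have hyx : B y x = B x y := hB.eq y x
    simp only [map_add, LinearMap.add_apply, ha, hc, hyx, ← hd, algebraMap_int_eq, eq_intCast]
    push_cast
    ring
  | smul n x _ ih =>
    obtain ⟨a, ha⟩ := ih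
    exact ⟨n * n * a, by simp [ha, zsmul_eq_mul]; ring⟩

/-- The coordinates of `x` are recovered from the integers `B x (b j)` through the integral
inverse of the Gram matrix. -/
lemma dualSubmodule_span_le_of_isUnit_gram [Fintype ι] [DecidableEq ι] (b : Basis ι ℚ V)
    (G : Matrix ι ι ℤ) (hG : ∀ i j, B (b i) (b j) = G i j) (hGu : IsUnit G) :
    B.dualSubmodule (span ℤ (Set.range b)) ≤ span ℤ (Set.range b) := by
  intro x hx
  choose m hm using fun j => mem_one.mp (hx (b j) (subset_span ⟨j, rfl⟩))
  simp only [algebraMap_int_eq, eq_intCast] at hm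
  have hcoord : b.repr x ᵥ* G.map (↑) = fun j => (m j : ℚ) := by
    ext j
    rw [hm j]
    conv_rhs => rw [← b.sum_repr x]
    simp only [map_sum, map_smul, LinearMap.sum_apply, LinearMap.smul_apply, hG, smul_eq_mul]
    rfl
  have hinv : G.map ((↑) : ℤ → ℚ) * G⁻¹.map (↑) = 1 := by
    rw [← Matrix.map_one _ Int.cast_zero Int.cast_one,
      ← G.mul_nonsing_inv ((G.isUnit_iff_isUnit_det).mp hGu)]
    exact (Matrix.map_mul (f := Int.castRingHom ℚ)).symm
  refine (b.mem_span_iff_repr_mem ℤ x).mpr fun i => ⟨∑ j, m j * G⁻¹ j i, ?_⟩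
  rw [← Matrix.vecMul_one (b.repr x), ← hinv, ← Matrix.vecMul_vecMul, hcoord]
  simp [Matrix.vecMul, dotProduct]

lemma dualSubmodule_span_eq_of_isUnit_gram [Fintype ι] [DecidableEq ι] (b : Basis ι ℚ V)
    (G : Matrix ι ι ℤ) (hG : ∀ i j, B (b i) (b j) = G i j) (hGu : IsUnit G) :
    B.dualSubmodule (span ℤ (Set.range b)) = span ℤ (Set.range b) :=
  le_antisymm (B.dualSubmodule_span_le_of_isUnit_gram b G hG hGu)
    (B.span_le_dualSubmodule_of_gram b G hG)

lemma exists_isometry_of_gram_eq {M : Type*} [AddCommGroup M] [Module ℤ M]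
    (bM : Basis ι ℤ M) (BM : LinearMap.BilinForm ℤ M) (b : Basis ι ℚ V)
    (h : ∀ i j, B (b i) (b j) = BM (bM i) (bM j)) :
    ∃ f : M ≃ₗ[ℤ] span ℤ (Set.range b), ∀ u v, B (f u) (f v) = BM u v := by
  let f := bM.equiv (b.restrictScalars ℤ) (Equiv.refl ι)
  let g := (span ℤ (Set.range b)).subtype ∘ₗ f.toLinearMap
  have hext : (B.restrictScalars₁₂ ℤ ℤ).compl₁₂ g g = BM.compr₂ (Algebra.linearMap ℤ ℚ) :=
    LinearMap.ext_basis bM bM fun i j => by simpa [g, f] using h i j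
  exact ⟨f, fun u v => by simpa [g] using LinearMap.congr_fun₂ hext u v⟩

end LinearMap.BilinForm

namespace CalE8

/-- Twice the simple roots of `E₈` (Bourbaki numbering), as the columns, in the coordinates of
`ℚ⁸` in which `E₈ = D₈ ∪ (D₈ + (1/2, …, 1/2))`. -/
def rootsX2 : Matrix (Fin 8) (Fin 8) ℤ :=
  !![1, 2, -2, 0, 0, 0, 0, 0; -1, 2, 2, -2, 0, 0, 0, 0; -1, 0, 0, 2, -2, 0, 0, 0;
     -1, 0, 0, 0, 2, -2, 0, 0; -1, 0, 0, 0, 0, 2, -2, 0; -1, 0, 0, 0, 0, 0, 2, -2;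
     -1, 0, 0, 0, 0, 0, 0, 2; 1, 0, 0, 0, 0, 0, 0, 0]

def cartanE8Inv : Matrix (Fin 8) (Fin 8) ℤ :=
  !![4, 5, 7, 10, 8, 6, 4, 2; 5, 8, 10, 15, 12, 9, 6, 3; 7, 10, 14, 20, 16, 12, 8, 4;
     10, 15, 20, 30, 24, 18, 12, 6; 8, 12, 16, 24, 20, 15, 10, 5; 6, 9, 12, 18, 15, 12, 8, 4;
     4, 6, 8, 12, 10, 8, 6, 3; 2, 3, 4, 6, 5, 4, 3, 2]

lemma cartanE8_mul_cartanE8Inv : cartanE8 * cartanE8Inv = 1 := by decide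

lemma cartanE8_transpose : cartanE8ᵀ = cartanE8 := by decide

lemma cartanE8_diag : ∀ i, cartanE8 i i = 2 := by decide

lemma rootsX2_gram : rootsX2ᵀ * rootsX2 = 4 • cartanE8 := by decide

/- `cartanE8Inv * rootsX2ᵀ` is twice the inverse of the root matrix; the next two facts say that
the inverse is integral on the vectors `e_i ± e_j` and `(1/2, …, 1/2)` that generate `E₈`. -/
lemma two_dvd_rootsInvX2_add :
    ∀ t i j, 2 ∣ (cartanE8Inv * rootsX2ᵀ) t i + (cartanE8Inv * rootsX2ᵀ) t j := by decide

lemma four_dvd_rootsInvX2_sum : ∀ t, 4 ∣ ∑ i, (cartanE8Inv * rootsX2ᵀ) t i := by decide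

noncomputable abbrev castQ : Matrix (Fin 8) (Fin 8) ℤ →+* Matrix (Fin 8) (Fin 8) ℚ :=
  (Int.castRingHom ℚ).mapMatrix

lemma castQ_transpose (M : Matrix (Fin 8) (Fin 8) ℤ) : castQ Mᵀ = (castQ M)ᵀ :=
  (Matrix.transpose_map ..).symm

lemma castQ_cartanE8 : castQ cartanE8 = cartanE8Q := by decide

noncomputable def e8Roots : Matrix (Fin 8) (Fin 8) ℚ := (1 / 2 : ℚ) • castQ rootsX2

noncomputable def e8RootsInv : Matrix (Fin 8) (Fin 8) ℚ := castQ cartanE8Inv * e8Rootsᵀ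

lemma e8Roots_gram : e8Rootsᵀ * e8Roots = cartanE8Q := by
  have h := congrArg castQ rootsX2_gram
  rw [map_mul, map_nsmul, castQ_transpose, castQ_cartanE8] at h
  rw [e8Roots, Matrix.transpose_smul, Matrix.smul_mul, Matrix.mul_smul, h, smul_smul,
    ← Nat.cast_smul_eq_nsmul ℚ, smul_smul]
  norm_num

lemma e8RootsInv_mul : e8RootsInv * e8Roots = 1 := by
  rw [e8RootsInv, Matrix.mul_assoc, e8Roots_gram, ← castQ_cartanE8, ← map_mul,
    mul_eq_one_comm.mp cartanE8_mul_cartanE8Inv, map_one]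

lemma e8RootsInv_eq : e8RootsInv = (1 / 2 : ℚ) • castQ (cartanE8Inv * rootsX2ᵀ) := by
  rw [e8RootsInv, e8Roots, Matrix.transpose_smul, Matrix.mul_smul, map_mul, castQ_transpose]

noncomputable def e8RootsUnit : (Matrix (Fin 8) (Fin 8) ℚ)ˣ :=
  ⟨e8Roots, e8RootsInv, mul_eq_one_comm.mp e8RootsInv_mul, e8RootsInv_mul⟩

/-- The basis `αₜ ⊗ εₖ`, where `αₜ` is the `t`-th column of `e8Roots` and `εₖ = Pi.single k 1`
is the `k`-th simple root in the root coordinates of the second factor. -/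
noncomputable def tensorBasis : Basis (Fin 8 × Fin 8) ℚ (Fin 8 → Fin 8 → ℚ) :=
  (Matrix.stdBasis ℚ (Fin 8) (Fin 8)).map
    ((e8RootsUnit.mulLeftLinearEquiv ℚ _).trans (Matrix.ofLinearEquiv ℚ).symm)

lemma tensorBasis_apply (t k : Fin 8) :
    tensorBasis (t, k) = vecMulVec (fun i => e8Roots i t) (Pi.single k 1) := by
  rw [tensorBasis, Basis.map_apply, Matrix.stdBasis_eq_single]
  ext i m
  by_cases hm : m = k
  · subst hm
    simp [e8RootsUnit, vecMulVec_apply, Matrix.mul_single_apply_same]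
  · simp [e8RootsUnit, vecMulVec_apply, Matrix.mul_single_apply_of_ne (hbj := hm), hm]

lemma tensorBasis_repr (x : Fin 8 → Fin 8 → ℚ) (t k : Fin 8) :
    tensorBasis.repr x (t, k) = (e8RootsInv * Matrix.of x) t k := by
  rw [tensorBasis, Basis.map_repr]
  simp [Matrix.stdBasis, e8RootsUnit]

noncomputable def bX8Form : LinearMap.BilinForm ℚ (Fin 8 → Fin 8 → ℚ) :=
  ∑ i, bE8Q.compl₁₂ (LinearMap.proj i) (LinearMap.proj i)

lemma bX8Form_apply (x y : Fin 8 → Fin 8 → ℚ) : bX8Form x y = bX8 x y := by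
  simp [bX8Form, bX8]

lemma bE8Q_comm (v w : Fin 8 → ℚ) : bE8Q v w = bE8Q w v := by
  rw [bE8Q, Matrix.toLinearMap₂'_apply', Matrix.toLinearMap₂'_apply', dotProduct_mulVec,
    dotProduct_comm, ← mulVec_transpose, ← castQ_cartanE8, ← castQ_transpose, cartanE8_transpose]

lemma bX8Form_isSymm : bX8Form.IsSymm :=
  ⟨fun x y => by simp only [bX8Form_apply, bX8, bE8Q_comm]⟩

lemma bX8_vecMulVec (v w α β : Fin 8 → ℚ) :
    bX8 (vecMulVec v α) (vecMulVec w β) = (v ⬝ᵥ w) * bE8Q α β := by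
  have hrow : ∀ (u γ : Fin 8 → ℚ) i, vecMulVec u γ i = u i • γ := fun u γ i => by
    ext; simp [vecMulVec_apply]
  simp only [bX8, dotProduct, Finset.sum_mul, hrow, map_smul, LinearMap.smul_apply, smul_eq_mul]
  exact Finset.sum_congr rfl fun i _ => by ring

lemma bX8Form_tensorBasis (p q : Fin 8 × Fin 8) :
    bX8Form (tensorBasis p) (tensorBasis q) = ((cartanE8 ⊗ₖ cartanE8) p q : ℤ) := by
  obtain ⟨t, k⟩ := p
  obtain ⟨s, l⟩ := q
  have hroots : (fun i => e8Roots i t) ⬝ᵥ (fun i => e8Roots i s) = cartanE8Q t s := by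
    rw [← e8Roots_gram, Matrix.mul_apply]
    rfl
  rw [bX8Form_apply, tensorBasis_apply, tensorBasis_apply, bX8_vecMulVec, hroots]
  simp [bE8Q, Matrix.toLinearMap₂'_apply', ← castQ_cartanE8]

lemma isUnit_cartanE8_kronecker : IsUnit (cartanE8 ⊗ₖ cartanE8) :=
  have h : IsUnit cartanE8 :=
    ⟨⟨cartanE8, cartanE8Inv, cartanE8_mul_cartanE8Inv,
      mul_eq_one_comm.mp cartanE8_mul_cartanE8Inv⟩, rfl⟩
  Matrix.IsUnit.kronecker h h

/-- Generators of `E₈ ⊂ ℚ⁸` in standard coordinates. -/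
def e8StdGens : Set (Fin 8 → ℚ) :=
  {v | ∃ i j : Fin 8, i < j ∧
      (v = Pi.single i 1 - Pi.single j 1 ∨ v = Pi.single i 1 + Pi.single j 1)} ∪
    {fun _ => 1 / 2}

lemma vecMulVec_single_one (i : Fin 8) (α : Fin 8 → ℚ) :
    vecMulVec (Pi.single i 1) α = Pi.single i α := by
  ext j m
  by_cases h : j = i
  · subst h; simp [vecMulVec_apply]
  · simp [vecMulVec_apply, h]

lemma calE8_eq_span_vecMulVec : calE8 =
    span ℤ (Set.image2 vecMulVec e8StdGens {α | IsIntVec α} : Set (Fin 8 → Fin 8 → ℚ)) := by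
  rw [calE8, calD8, ← span_union]
  congr 1
  ext z
  simp only [e8StdGens, Set.mem_union, Set.mem_ofPred_eq]
  have hhalf : ∀ α : Fin 8 → ℚ,
      vecMulVec (fun _ : Fin 8 => (1 / 2 : ℚ)) α = fun _ => (1 / 2 : ℚ) • α := fun α => by
    ext; simp [vecMulVec_apply]
  constructor
  · rintro (⟨α, hα, i, j, hij, rfl | rfl⟩ | ⟨α, hα, rfl⟩)
    · exact ⟨_, Or.inl ⟨i, j, hij, Or.inl rfl⟩, α, hα,
        by rw [sub_vecMulVec, vecMulVec_single_one, vecMulVec_single_one]; rfl⟩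
    · exact ⟨_, Or.inl ⟨i, j, hij, Or.inr rfl⟩, α, hα,
        by rw [add_vecMulVec, vecMulVec_single_one, vecMulVec_single_one]; rfl⟩
    · exact ⟨_, Or.inr rfl, α, hα, hhalf α⟩
  · rintro ⟨v, ⟨i, j, hij, rfl | rfl⟩ | rfl, α, hα, rfl⟩
    · exact Or.inl ⟨α, hα, i, j, hij, Or.inl
        (by rw [sub_vecMulVec, vecMulVec_single_one, vecMulVec_single_one]; rfl)⟩
    · exact Or.inl ⟨α, hα, i, j, hij, Or.inr
        (by rw [add_vecMulVec, vecMulVec_single_one, vecMulVec_single_one]; rfl)⟩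
    · exact Or.inr ⟨α, hα, hhalf α⟩

lemma vecMulVec_mem_calE8 {v α : Fin 8 → ℚ} (hv : v ∈ span ℤ e8StdGens) (hα : IsIntVec α) :
    vecMulVec v α ∈ calE8 := by
  rw [calE8_eq_span_vecMulVec]
  induction hv using span_induction with
  | mem v hv => exact subset_span ⟨v, hv, α, hα, rfl⟩
  | zero => rw [zero_vecMulVec]; exact zero_mem _
  | add v w _ _ hv hw => rw [add_vecMulVec]; exact add_mem hv hw
  | smul n v _ hv => rw [smul_vecMulVec]; exact smul_mem _ n hv

lemma e8Roots_col_mem_span (t : Fin 8) : (fun i => e8Roots i t) ∈ span ℤ e8StdGens := by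
  have hν : ∀ i j : Fin 8, i < j → Pi.single i 1 - Pi.single j 1 ∈ span ℤ e8StdGens :=
    fun i j hij => subset_span (Or.inl ⟨i, j, hij, Or.inl rfl⟩)
  have hμ : ∀ i j : Fin 8, i < j → Pi.single i 1 + Pi.single j 1 ∈ span ℤ e8StdGens :=
    fun i j hij => subset_span (Or.inl ⟨i, j, hij, Or.inr rfl⟩)
  have hhalf : (fun _ => 1 / 2 : Fin 8 → ℚ) ∈ span ℤ e8StdGens := subset_span (Or.inr rfl)
  fin_cases t <;> [
    convert sub_mem (sub_mem (sub_mem hhalf (hμ 1 2 (by decide))) (hμ 3 4 (by decide)))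
      (hμ 5 6 (by decide)) using 1;
    convert hμ 0 1 (by decide) using 1;
    convert neg_mem (hν 0 1 (by decide)) using 1;
    convert neg_mem (hν 1 2 (by decide)) using 1;
    convert neg_mem (hν 2 3 (by decide)) using 1;
    convert neg_mem (hν 3 4 (by decide)) using 1;
    convert neg_mem (hν 4 5 (by decide)) using 1;
    convert neg_mem (hν 5 6 (by decide)) using 1]
  all_goals
    ext i
    fin_cases i <;> norm_num [e8Roots, rootsX2, Pi.single_apply, Fin.ext_iff]

lemma isIntVec_single_one (k : Fin 8) : IsIntVec (Pi.single k 1) := fun i =>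
  ⟨if i = k then 1 else 0, by by_cases h : i = k <;> simp [h]⟩

lemma isIntVec_e8RootsInv_mulVec {v : Fin 8 → ℚ} (hv : v ∈ e8StdGens) :
    IsIntVec (e8RootsInv *ᵥ v) := by
  intro t
  have hN : ∀ w : Fin 8 → ℚ,
      (e8RootsInv *ᵥ w) t = ∑ i, ((cartanE8Inv * rootsX2ᵀ) t i : ℚ) / 2 * w i := fun w => by
    simp only [e8RootsInv_eq, mulVec, dotProduct, Matrix.smul_apply, smul_eq_mul]
    exact Finset.sum_congr rfl fun i _ => by
      simp only [RingHom.mapMatrix_apply, Matrix.map_apply, eq_intCast]; ring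
  rcases hv with ⟨i, j, -, rfl | rfl⟩ | rfl
  · obtain ⟨c, hc⟩ := two_dvd_rootsInvX2_add t i j
    refine ⟨c - (cartanE8Inv * rootsX2ᵀ) t j, ?_⟩
    have hcQ := congrArg ((↑) : ℤ → ℚ) hc
    push_cast at hcQ
    simp [hN, Pi.single_apply, mul_sub, Finset.sum_sub_distrib]
    linarith
  · obtain ⟨c, hc⟩ := two_dvd_rootsInvX2_add t i j
    refine ⟨c, ?_⟩
    have hcQ := congrArg ((↑) : ℤ → ℚ) hc
    push_cast at hcQ
    simp [hN, Pi.single_apply, mul_add, Finset.sum_add_distrib]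
    linarith
  · obtain ⟨c, hc⟩ := four_dvd_rootsInvX2_sum t
    refine ⟨c, ?_⟩
    simp only [hN, ← Finset.sum_mul, ← Finset.sum_div, ← Int.cast_sum, hc]
    push_cast
    ring

lemma vecMulVec_mem_span_tensorBasis {v α : Fin 8 → ℚ} (hv : IsIntVec (e8RootsInv *ᵥ v))
    (hα : IsIntVec α) : vecMulVec v α ∈ span ℤ (Set.range tensorBasis) := by
  refine (tensorBasis.mem_span_iff_repr_mem ℤ _).mpr fun ⟨t, k⟩ => ?_
  obtain ⟨a, ha⟩ := hv t
  obtain ⟨c, hc⟩ := hα k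
  refine ⟨a * c, ((tensorBasis_repr _ t k).trans ?_).symm⟩
  change (e8RootsInv * vecMulVec v α) t k = _
  rw [mul_vecMulVec, vecMulVec_apply, ha, hc]
  simp

lemma calE8_eq_span_tensorBasis : calE8 = span ℤ (Set.range tensorBasis) := by
  refine le_antisymm ?_ ?_
  · rw [calE8_eq_span_vecMulVec, span_le]
    rintro _ ⟨v, hv, α, hα, rfl⟩
    exact vecMulVec_mem_span_tensorBasis (isIntVec_e8RootsInv_mulVec hv) hα
  · rw [span_le]
    rintro _ ⟨⟨t, k⟩, rfl⟩
    rw [tensorBasis_apply]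
    exact vecMulVec_mem_calE8 (e8Roots_col_mem_span t) (isIntVec_single_one k)

lemma even_cartanE8_kronecker_diag (p : Fin 8 × Fin 8) : Even ((cartanE8 ⊗ₖ cartanE8) p p) := by
  simp only [kroneckerMap_apply, cartanE8_diag]
  exact ⟨2, rfl⟩

lemma tmul_bE8_tensorProduct_basisFun (p q : Fin 8 × Fin 8) :
    LinearMap.BilinForm.tmul bE8 bE8
        ((Pi.basisFun ℤ (Fin 8)).tensorProduct (Pi.basisFun ℤ (Fin 8)) p)
        ((Pi.basisFun ℤ (Fin 8)).tensorProduct (Pi.basisFun ℤ (Fin 8)) q) =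
      (cartanE8 ⊗ₖ cartanE8) p q := by
  rw [Basis.tensorProduct_apply, Basis.tensorProduct_apply, LinearMap.BilinForm.tensorDistrib_tmul]
  simp [bE8, Matrix.toLinearMap₂'_apply', mul_comm]

end CalE8

open CalE8

/-- **`ℰ₈ ≅ E₈ ⊗ E₈` is even unimodular of rank `64`.**
There is a `ℤ`-linear isometry from the tensor product lattice `E₈ ⊗ E₈` onto `ℰ₈`;
moreover `ℰ₈` is even, equal to its own dual lattice, and has rank `64`. -/
theorem calE8_isometric_E8_tensor_E8_even_unimodular :
    (∃ f : ((Fin 8 → ℤ) ⊗[ℤ] (Fin 8 → ℤ)) ≃ₗ[ℤ] ↥calE8,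
      ∀ u v, bX8 (f u : Fin 8 → Fin 8 → ℚ) (f v : Fin 8 → Fin 8 → ℚ)
        = ((LinearMap.BilinForm.tmul bE8 bE8) u v : ℚ)) ∧
    (∀ x ∈ calE8, ∃ k : ℤ, bX8 x x = 2 * k) ∧
    (∀ x : Fin 8 → Fin 8 → ℚ, (∀ y ∈ calE8, ∃ m : ℤ, bX8 x y = m) ↔ x ∈ calE8) ∧
    Module.finrank ℚ (Submodule.span ℚ (calE8 : Set (Fin 8 → Fin 8 → ℚ))) = 64 := by
  refine ⟨?_, fun x hx => ?_, fun x => ?_, ?_⟩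
  · obtain ⟨f, hf⟩ := bX8Form.exists_isometry_of_gram_eq
      ((Pi.basisFun ℤ (Fin 8)).tensorProduct (Pi.basisFun ℤ (Fin 8)))
      (LinearMap.BilinForm.tmul bE8 bE8) tensorBasis
      (fun p q => by rw [bX8Form_tensorBasis, tmul_bE8_tensorProduct_basisFun])
    exact ⟨f.trans (LinearEquiv.ofEq _ _ calE8_eq_span_tensorBasis.symm),
      fun u v => hf u v⟩
  · rw [calE8_eq_span_tensorBasis] at hx
    simpa [bX8Form_apply] using bX8Form.exists_apply_self_eq_two_mul_of_mem_span bX8Form_isSymm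
      tensorBasis _ bX8Form_tensorBasis even_cartanE8_kronecker_diag hx
  · have h := SetLike.ext_iff.mp (bX8Form.dualSubmodule_span_eq_of_isUnit_gram tensorBasis _
      bX8Form_tensorBasis isUnit_cartanE8_kronecker) x
    rw [← calE8_eq_span_tensorBasis] at h
    rw [← h, LinearMap.BilinForm.mem_dualSubmodule]
    simp [mem_one, bX8Form_apply, eq_comm]
  · rw [calE8_eq_span_tensorBasis, span_span_of_tower, tensorBasis.span_eq, finrank_top,
      finrank_eq_card_basis tensorBasis]
    simp
end

section
/- Let R be an ADE root lattice and α, β distinct positive roots of R. In R ⊗ E₈, if ⟨α,β⟩ = 0 then M_α + M_β is isometric to the orthogonal direct sum √2E₈ ⊥ √2E₈, and if ⟨α,β⟩ = ±1 then M_α + M_β is isometric to A₂ ⊗ E₈. -/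
open TensorProduct

/-- The Cartan matrix of `A₂`, the Gram matrix of the `A₂` root lattice. -/
def cartanA2 : Matrix (Fin 2) (Fin 2) ℤ := !![2, -1; -1, 2]

/-- The `A₂` bilinear form on `ℤ²`. -/
noncomputable def bA2 : LinearMap.BilinForm ℤ (Fin 2 → ℤ) :=
  Matrix.toLinearMap₂' ℤ cartanA2

/-!
For roots `a, b` of `R`, the map `(u, v) ↦ a ⊗ u + b ⊗ v` from `E₈ × E₈` onto `M_a + M_b` pulls
the form of `R ⊗ E₈` back to `G ⊗ E₈`, where `G` is the Gram matrix of `(a, b)`. It is injective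
because `det G = 4 - ⟨a,b⟩² ≠ 0` and the `E₈` form is nondegenerate. For `⟨α,β⟩ = 0` we get
`G = 2·I`, i.e. `√2E₈ ⊥ √2E₈`; for `⟨α,β⟩ = s = ±1` the pair `(α, -sβ)`, which spans the same
lattice, has Gram matrix the Cartan matrix of `A₂`.
-/

open LinearMap Function

def cartanE8inv : Matrix (Fin 8) (Fin 8) ℤ :=
  !![4, 5, 7, 10, 8, 6, 4, 2;
     5, 8, 10, 15, 12, 9, 6, 3;
     7, 10, 14, 20, 16, 12, 8, 4;
     10, 15, 20, 30, 24, 18, 12, 6;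
     8, 12, 16, 24, 20, 15, 10, 5;
     6, 9, 12, 18, 15, 12, 8, 4;
     4, 6, 8, 12, 10, 8, 6, 3;
     2, 3, 4, 6, 5, 4, 3, 2]

lemma cartanE8inv_mul_cartanE8 : cartanE8inv * cartanE8 = 1 := by decide

lemma bE8_separatingLeft : bE8.SeparatingLeft :=
  (Matrix.nondegenerate_iff_det_ne_zero.mpr
    (Matrix.det_ne_zero_of_left_inverse cartanE8inv_mul_cartanE8)).separatingLeft.toLinearMap₂'

section PairTensor

variable {K R L : Type*} [CommRing K] [AddCommGroup R] [Module K R] [AddCommGroup L] [Module K L]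

variable (K L) in
def pairTensor (a b : R) : (L × L) →ₗ[K] R ⊗[K] L :=
  (TensorProduct.mk K R L a).coprod (TensorProduct.mk K R L b)

@[simp]
lemma pairTensor_apply (a b : R) (p : L × L) :
    pairTensor K L a b p = a ⊗ₜ p.1 + b ⊗ₜ p.2 :=
  rfl

lemma range_pairTensor (a b : R) :
    range (pairTensor K L a b) =
      Submodule.span K (Set.range (a ⊗ₜ[K] · : L → R ⊗[K] L)) ⊔
        Submodule.span K (Set.range (b ⊗ₜ[K] · : L → R ⊗[K] L)) := by
  rw [pairTensor, range_coprod, ← Submodule.span_eq (range (mk K R L a)),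
    ← Submodule.span_eq (range (mk K R L b)), coe_range, coe_range]
  rfl

lemma tmul_pairTensor (bR : LinearMap.BilinForm K R) (bL : LinearMap.BilinForm K L) (a b : R)
    (p q : L × L) :
    bR.tmul bL (pairTensor K L a b p) (pairTensor K L a b q) =
      bR a a * bL p.1 q.1 + bR a b * bL p.1 q.2 + bR b a * bL p.2 q.1 + bR b b * bL p.2 q.2 := by
  simp only [pairTensor_apply, map_add, LinearMap.add_apply,
    LinearMap.BilinForm.tensorDistrib_tmul, smul_eq_mul]
  ring

lemma pairTensor_injective [IsDomain K] (bR : LinearMap.BilinForm K R)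
    {bL : LinearMap.BilinForm K L} (hL : bL.SeparatingLeft) {a b : R}
    (hdet : bR a a * bR b b - bR a b * bR b a ≠ 0) :
    Injective (pairTensor K L a b) := by
  rw [injective_iff_map_eq_zero]
  rintro ⟨u, v⟩ h
  have hpair (q : L × L) : bR a a * bL u q.1 + bR a b * bL u q.2 + bR b a * bL v q.1 +
      bR b b * bL v q.2 = 0 := by
    rw [← tmul_pairTensor bR bL a b (u, v) q, h, map_zero, LinearMap.zero_apply]
  have hleft (w : L) : bR a a * bL u w + bR b a * bL v w = 0 := by simpa using hpair (w, 0)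
  have hright (w : L) : bR a b * bL u w + bR b b * bL v w = 0 := by simpa using hpair (0, w)
  have hu : u = 0 := hL u fun w => (mul_eq_zero.mp (by
    linear_combination bR b b * hleft w - bR b a * hright w)).resolve_left hdet
  have hv : v = 0 := hL v fun w => (mul_eq_zero.mp (by
    linear_combination bR a a * hright w - bR a b * hleft w)).resolve_left hdet
  simp [hu, hv]

variable (K L) in
noncomputable def finTwoTensorEquiv : (Fin 2 → K) ⊗[K] L ≃ₗ[K] (L × L) :=
  (TensorProduct.comm K _ L).trans
    ((piScalarRight K K L (Fin 2)).trans (LinearEquiv.finTwoArrow K L))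

lemma finTwoTensorEquiv_symm_apply (p : L × L) :
    (finTwoTensorEquiv K L).symm p =
      pairTensor K L (Pi.single 0 1 : Fin 2 → K) (Pi.single 1 1) p := by
  have hsplit : ![p.1, p.2] = Pi.single 0 p.1 + Pi.single 1 p.2 := by
    ext i; fin_cases i <;> simp
  simp [finTwoTensorEquiv, hsplit]

end PairTensor

noncomputable def intSubmoduleEquivOfCoeEq {M : Type*} [AddCommGroup M] {m₁ m₂ : Module ℤ M}
    {S : @Submodule ℤ M _ _ m₁} {T : @Submodule ℤ M _ _ m₂} (h : (S : Set M) = T) :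
    @LinearEquiv ℤ ℤ _ _ (RingHom.id ℤ) (RingHom.id ℤ) _ _ S T _ _ S.module T.module :=
  AddEquiv.toIntLinearEquiv { Equiv.setCongr h with map_add' := fun _ _ => rfl }

section IntLattice

-- Otherwise instance search fails on `SMulCommClass ℤ ℤ R`, which `bR.tmul` needs.
attribute [-instance] instMulActionIntOfSubtractionMonoid

variable {R L : Type*} [AddCommGroup R] [Module ℤ R] [AddCommGroup L]

/- Instance search equips `R ⊗[ℤ] L` with `AddCommGroup.toIntModule`, which is only propositionally
equal to the module structure `TensorProduct` uses for `range (pairTensor ℤ L a b)`; hence the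
transport along `intSubmoduleEquivOfCoeEq`. -/
noncomputable def pairTensorIntEquiv {a b : R} (h : Injective (pairTensor ℤ L a b)) :
    (L × L) ≃ₗ[ℤ] ↥(Submodule.span ℤ (Set.range (a ⊗ₜ[ℤ] · : L → R ⊗[ℤ] L)) ⊔
      Submodule.span ℤ (Set.range (b ⊗ₜ[ℤ] · : L → R ⊗[ℤ] L))) := by
  refine (LinearEquiv.ofInjective _ h).trans (intSubmoduleEquivOfCoeEq ?_)
  rw [range_pairTensor]
  congr! <;> exact Subsingleton.elim _ _

lemma coe_pairTensorIntEquiv {a b : R} (h : Injective (pairTensor ℤ L a b)) (p : L × L) :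
    (pairTensorIntEquiv h p : R ⊗[ℤ] L) = pairTensor ℤ L a b p :=
  rfl

lemma tmul_bA2_finTwoTensorEquiv_symm (bL : LinearMap.BilinForm ℤ L) (p q : L × L) :
    bA2.tmul bL ((finTwoTensorEquiv ℤ L).symm p) ((finTwoTensorEquiv ℤ L).symm q) =
      2 * bL p.1 q.1 - bL p.1 q.2 - bL p.2 q.1 + 2 * bL p.2 q.2 := by
  rw [finTwoTensorEquiv_symm_apply, finTwoTensorEquiv_symm_apply, tmul_pairTensor]
  change 2 * _ + -1 * _ + -1 * _ + 2 * _ = _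
  ring

lemma exists_isometry_prod_of_orthogonal (bR : LinearMap.BilinForm ℤ R)
    {bL : LinearMap.BilinForm ℤ L} (hL : bL.SeparatingLeft) {a b : R}
    (ha : bR a a = 2) (hb : bR b b = 2) (hab : bR a b = 0) (hba : bR b a = 0) :
    ∃ f : (L × L) ≃ₗ[ℤ] ↥(Submodule.span ℤ (Set.range (a ⊗ₜ[ℤ] · : L → R ⊗[ℤ] L)) ⊔
        Submodule.span ℤ (Set.range (b ⊗ₜ[ℤ] · : L → R ⊗[ℤ] L))),
      ∀ p q, bR.tmul bL (f p) (f q) = 2 * bL p.1 q.1 + 2 * bL p.2 q.2 := by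
  have hinj : Injective (pairTensor ℤ L a b) :=
    pairTensor_injective bR hL (by simp [ha, hb, hab, hba])
  refine ⟨pairTensorIntEquiv hinj, fun p q => ?_⟩
  rw [coe_pairTensorIntEquiv, coe_pairTensorIntEquiv, tmul_pairTensor]
  simp [ha, hb, hab, hba]

lemma exists_isometry_tmul_bA2 (bR : LinearMap.BilinForm ℤ R)
    {bL : LinearMap.BilinForm ℤ L} (hL : bL.SeparatingLeft) {a b : R}
    (ha : bR a a = 2) (hb : bR b b = 2) {s : ℤˣ} (hab : bR a b = s) (hba : bR b a = s) :
    ∃ f : ((Fin 2 → ℤ) ⊗[ℤ] L) ≃ₗ[ℤ] ↥(Submodule.span ℤ (Set.range (a ⊗ₜ[ℤ] · : L → R ⊗[ℤ] L)) ⊔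
        Submodule.span ℤ (Set.range (b ⊗ₜ[ℤ] · : L → R ⊗[ℤ] L))),
      ∀ t t', bR.tmul bL (f t) (f t') = bA2.tmul bL t t' := by
  have hss : (s : ℤ) * s = 1 := by rw [← Units.val_mul, Int.units_mul_self, Units.val_one]
  have hinj : Injective (pairTensor ℤ L a b) :=
    pairTensor_injective bR hL (by rw [ha, hb, hab, hba, hss]; norm_num)
  -- the Gram matrix of `(a, -s • b)` is `cartanA2`
  let g := ((LinearEquiv.refl ℤ L).prodCongr (LinearEquiv.smulOfUnit (-s))).trans
    (pairTensorIntEquiv hinj)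
  have hg (p q : L × L) : bR.tmul bL (g p) (g q) =
      2 * bL p.1 q.1 - bL p.1 q.2 - bL p.2 q.1 + 2 * bL p.2 q.2 := by
    simp only [g, LinearEquiv.trans_apply, coe_pairTensorIntEquiv, tmul_pairTensor]
    simp only [LinearEquiv.smulOfUnit, LinearEquiv.prodCongr_apply, LinearEquiv.refl_apply,
      DistribMulAction.toLinearEquiv_apply, Units.smul_def, Units.val_neg, neg_smul, map_neg,
      map_smul, LinearMap.neg_apply, LinearMap.smul_apply, smul_eq_mul, ha, hb, hab, hba]
    linear_combination (2 * bL p.2 q.2 - bL p.1 q.2 - bL p.2 q.1) * hss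
  refine ⟨(finTwoTensorEquiv ℤ L).trans g, fun t t' => ?_⟩
  have := hg (finTwoTensorEquiv ℤ L t) (finTwoTensorEquiv ℤ L t')
  rwa [← tmul_bA2_finTwoTensorEquiv_symm, LinearEquiv.symm_apply_apply,
    LinearEquiv.symm_apply_apply] at this

end IntLattice

attribute [-instance] instMulActionIntOfSubtractionMonoid in
/-- **The lattice `M_α + M_β`.** Let `R` be an ADE root lattice and `α ≠ β` roots of
`R` (so `⟨α,β⟩ ∈ {0,±1}`). Inside the tensor product lattice `R ⊗ E₈`, with
`M_γ = ℤγ ⊗ E₈`: if `⟨α,β⟩ = 0` then `M_α + M_β ≅ √2E₈ ⊥ √2E₈`, and if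
`⟨α,β⟩ = ±1` then `M_α + M_β ≅ A₂ ⊗ E₈`. -/
theorem Malpha_plus_Mbeta
    {R : Type*} [AddCommGroup R] [Module ℤ R]
    (bR : LinearMap.BilinForm ℤ R) (hsym : ∀ x y, bR x y = bR y x)
    (α β : R) (hα : bR α α = 2) (hβ : bR β β = 2) (hne : α ≠ β) :
    (bR α β = 0 →
      ∃ f : ((Fin 8 → ℤ) × (Fin 8 → ℤ)) ≃ₗ[ℤ]
          ↥(Submodule.span ℤ (Set.range fun γ : Fin 8 → ℤ => α ⊗ₜ[ℤ] γ) ⊔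
            Submodule.span ℤ (Set.range fun γ : Fin 8 → ℤ => β ⊗ₜ[ℤ] γ)),
        ∀ u v, (LinearMap.BilinForm.tmul bR bE8) (f u).1 (f v).1
          = 2 * bE8 u.1 v.1 + 2 * bE8 u.2 v.2) ∧
    ((bR α β = 1 ∨ bR α β = -1) →
      ∃ f : ((Fin 2 → ℤ) ⊗[ℤ] (Fin 8 → ℤ)) ≃ₗ[ℤ]
          ↥(Submodule.span ℤ (Set.range fun γ : Fin 8 → ℤ => α ⊗ₜ[ℤ] γ) ⊔
            Submodule.span ℤ (Set.range fun γ : Fin 8 → ℤ => β ⊗ₜ[ℤ] γ)),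
        ∀ u v, (LinearMap.BilinForm.tmul bR bE8) (f u).1 (f v).1
          = (LinearMap.BilinForm.tmul bA2 bE8) u v) := by
  have hβα : bR β α = bR α β := hsym β α
  refine ⟨fun h0 => exists_isometry_prod_of_orthogonal bR bE8_separatingLeft hα hβ h0
    (hβα.trans h0), fun h1 => ?_⟩
  obtain ⟨s, hs⟩ := Int.isUnit_iff.mpr h1
  exact exists_isometry_tmul_bA2 bR bE8_separatingLeft hα hβ hs.symm (hβα.trans hs.symm)
end

section
/- Let R be an ADE root lattice, considered inside R ⊗ E₈ via M_α = ℤα ⊗ E₈ for roots α. For each root α, the SSD involution t_{M_α} acts on R ⊗ E₈ as r_α ⊗ 1, where r_α is the reflection in α on R; consequently the group generated by {t_{M_α} : α ∈ Φ⁺(R)} inside O(R ⊗ E₈) is isomorphic to the Weyl group of R. -/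
open TensorProduct

/-! The reflection `r_α` of `R` satisfies `r_α β + β ⟂ α` and `β - r_α β ∈ ℤα`, so for every
`z ∈ R ⊗ E₈` the decomposition `2z = (z + (r_α ⊗ 1) z) + (z - (r_α ⊗ 1) z)` splits `2z` into a
part orthogonal to `M_α = ℤα ⊗ E₈` and a part in `M_α`. Hence `t_{M_α}(2z) = 2 (r_α ⊗ 1) z`, and
since `R ⊗ E₈` is torsion-free, `t_{M_α} = r_α ⊗ 1`. As `ℤ⁸` is faithfully flat, `g ↦ g ⊗ 1` is an
injective group homomorphism, which maps the Weyl group onto the group generated by the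
`t_{M_α}`. -/

theorem isAddTorsionFree_tensorProduct_pi {K M ι : Type*} [CommSemiring K] [AddCommMonoid M]
    [Module K M] [IsAddTorsionFree M] [Fintype ι] [DecidableEq ι] :
    IsAddTorsionFree (M ⊗[K] (ι → K)) :=
  Function.Injective.isAddTorsionFree (piScalarRight K K M ι).toAddMonoidHom
    (LinearEquiv.injective _)

theorem Submodule.coe_span_int {M : Type*} [AddCommGroup M] {modM : Module ℤ M} (s : Set M) :
    (Submodule.span ℤ s : Set M) = AddSubgroup.closure s := by
  obtain rfl := Subsingleton.elim modM (AddCommGroup.toIntModule M)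
  exact congrArg SetLike.coe (Submodule.span_int_eq_addSubgroupClosure s)

section Reflection

variable {K M N : Type*} [CommRing K] [AddCommGroup M] [Module K M] [AddCommGroup N] [Module K N]

theorem sub_rTensor_reflection_mem_span {α : M} {f : Module.Dual K M} (hα : f α = 2)
    (z : M ⊗[K] N) :
    z - (Module.reflection hα).rTensor N z ∈
      Submodule.span K (Set.range fun γ : N => α ⊗ₜ[K] γ) := by
  induction z using TensorProduct.induction_on with
  | zero => simp
  | tmul β γ =>
    rw [LinearEquiv.rTensor_tmul, Module.reflection_apply, ← sub_tmul, sub_sub_cancel, smul_tmul]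
    exact Submodule.subset_span ⟨_, rfl⟩
  | add x y hx hy =>
    rw [map_add, add_sub_add_comm]
    exact add_mem hx hy

variable {B : LinearMap.BilinForm K M} (hB : ∀ x y, B x y = B y x) {α : M} (hα : B α α = 2)
include hB

theorem bilinForm_add_reflection_eq_zero (β : M) : B (β + Module.reflection hα β) α = 0 := by
  rw [Module.reflection_apply, map_add, map_sub, map_smul, LinearMap.add_apply,
    LinearMap.sub_apply, LinearMap.smul_apply, hα, hB β α, smul_eq_mul]
  ring

theorem tmul_add_rTensor_reflection_eq_zero (C : LinearMap.BilinForm K N) (z : M ⊗[K] N) :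
    ∀ m ∈ Submodule.span K (Set.range fun γ : N => α ⊗ₜ[K] γ),
      B.tmul C (z + (Module.reflection hα).rTensor N z) m = 0 := by
  refine fun m hm => (Submodule.span_le (p := LinearMap.ker _)).mpr ?_ hm
  rintro _ ⟨γ, rfl⟩
  induction z using TensorProduct.induction_on with
  | zero => simp
  | tmul β δ =>
    rw [LinearEquiv.rTensor_tmul, ← add_tmul, SetLike.mem_coe, LinearMap.mem_ker,
      LinearMap.BilinForm.tensorDistrib_tmul, bilinForm_add_reflection_eq_zero hB hα, smul_zero]
  | add x y hx hy =>
    rw [SetLike.mem_coe, LinearMap.mem_ker] at hx hy ⊢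
    rw [map_add ((Module.reflection hα).rTensor N), add_add_add_comm, map_add (B.tmul C),
      LinearMap.add_apply, hx, hy, add_zero]

theorem eq_rTensor_reflection_of_neg_on_span_of_id_on_orthogonal
    [IsAddTorsionFree (M ⊗[K] N)] (C : LinearMap.BilinForm K N) (T : M ⊗[K] N →+ M ⊗[K] N)
    (hT₁ : ∀ x ∈ Submodule.span K (Set.range fun γ : N => α ⊗ₜ[K] γ), T x = -x)
    (hT₂ : ∀ x, (∀ m ∈ Submodule.span K (Set.range fun γ : N => α ⊗ₜ[K] γ),
      B.tmul C x m = 0) → T x = x)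
    (z : M ⊗[K] N) :
    T z = (Module.reflection hα).rTensor N z := by
  set r := (Module.reflection hα).rTensor N
  have h_span := hT₁ _ (sub_rTensor_reflection_mem_span hα z)
  have h_orth := hT₂ _ (tmul_add_rTensor_reflection_eq_zero hB hα C z)
  refine nsmul_right_injective two_ne_zero ?_
  simp only [two_nsmul]
  calc T z + T z = T ((z + r z) + (z - r z)) := by rw [← map_add]; congr 1; abel
    _ = (z + r z) + -(z - r z) := by rw [map_add, h_orth, h_span]
    _ = r z + r z := by abel

end Reflection

def LinearEquiv.rTensorMonoidHom {K M : Type*} (N : Type*) [CommSemiring K] [AddCommMonoid M]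
    [Module K M] [AddCommMonoid N] [Module K N] :
    (M ≃ₗ[K] M) →* (M ⊗[K] N ≃ₗ[K] M ⊗[K] N) :=
  MonoidHom.mk' (LinearEquiv.rTensor N) (LinearEquiv.rTensor_mul N)

theorem LinearEquiv.rTensorMonoidHom_injective {K M : Type*} (N : Type*) [CommRing K]
    [AddCommGroup M] [Module K M] [AddCommGroup N] [Module K N] [Module.FaithfullyFlat K N] :
    Function.Injective (LinearEquiv.rTensorMonoidHom (K := K) (M := M) N) := by
  intro f g h
  have h_sub : LinearMap.rTensor N ((f : M →ₗ[K] M) - (g : M →ₗ[K] M)) = 0 := by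
    rw [LinearMap.rTensor_sub, ← LinearEquiv.coe_rTensor, ← LinearEquiv.coe_rTensor]
    exact sub_eq_zero.mpr (congrArg LinearEquiv.toLinearMap h)
  exact LinearEquiv.toLinearMap_injective
    (sub_eq_zero.mp ((Module.FaithfullyFlat.zero_iff_rTensor_zero K N _).mpr h_sub))

theorem DistribMulAction.toModuleAut_injective {S : Type*} (K M : Type*) [Group S] [Semiring K]
    [AddCommMonoid M] [Module K M] [DistribMulAction S M] [SMulCommClass S K M] [FaithfulSMul S M] :
    Function.Injective (DistribMulAction.toModuleAut K M : S →* M ≃ₗ[K] M) :=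
  fun _ _ h => FaithfulSMul.eq_of_smul_eq_smul fun m => LinearEquiv.congr_fun h m

theorem nonempty_closure_range_comp_mulEquiv {G H ι : Type*} [Group G] [Group H] (φ : G →* H)
    (hφ : Function.Injective φ) (s : ι → G) :
    Nonempty (Subgroup.closure (Set.range (φ ∘ s)) ≃* Subgroup.closure (Set.range s)) := by
  rw [Set.range_comp, ← MonoidHom.map_closure]
  exact ⟨(Subgroup.equivMapOfInjective _ φ hφ).symm⟩

theorem ssd_involutions_generate_weyl_group_general
    {R : Type*} [AddCommGroup R] [Module ℤ R] [Module.Free ℤ R]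
    (bR : LinearMap.BilinForm ℤ R) (hsym : ∀ x y, bR x y = bR y x)
    {ι : Type*} (α : ι → R) (hα : ∀ i, bR (α i) (α i) = 2)
    (s : ι → (R ≃ₗ[ℤ] R)) (hs : ∀ i x, s i x = x - bR (α i) x • α i)
    (T : ι → ((R ⊗[ℤ] (Fin 8 → ℤ)) ≃ₗ[ℤ] (R ⊗[ℤ] (Fin 8 → ℤ))))
    (hT1 : ∀ i, ∀ x ∈ Submodule.span ℤ (Set.range fun γ : Fin 8 → ℤ => α i ⊗ₜ[ℤ] γ),
      T i x = -x)
    (hT2 : ∀ i x,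
      (∀ m ∈ Submodule.span ℤ (Set.range fun γ : Fin 8 → ℤ => α i ⊗ₜ[ℤ] γ),
        (@LinearMap.BilinForm.tmul _ _ _ _ _ _ _ _ _ _ _ (@smulCommClass_self ℤ R _ Module.toDistribMulAction.toMulAction)
          (@IsScalarTower.left ℤ R _ Module.toDistribMulAction.toMulAction) _
          bR bE8) x m = 0) → T i x = x) :
    (∀ i x, T i x = TensorProduct.congr (s i) (LinearEquiv.refl ℤ (Fin 8 → ℤ)) x) ∧
    Nonempty ((Subgroup.closure (Set.range T)) ≃* (Subgroup.closure (Set.range s))) := by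
  -- The statement uses the canonical `ℤ`-module structure of an abelian group (`zsmul`,
  -- `AddCommGroup.toIntModule`) on `R` in `hs` and on `R ⊗ ℤ⁸` in `T`, `hT1`, `hT2`; it is not
  -- definitionally the given one, hence `int_smul_eq_zsmul`, `coe_span_int` and `toModuleAut`.
  have hs_refl : ∀ i, s i = Module.reflection (hα i) :=
    fun i => LinearEquiv.ext fun x => by
      rw [hs, Module.reflection_apply]
      exact congrArg _ (int_smul_eq_zsmul ..).symm
  have : IsAddTorsionFree R := .of_isTorsionFree ℤ R
  have := isAddTorsionFree_tensorProduct_pi (K := ℤ) (M := R) (ι := Fin 8)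
  have hT : ∀ i x, T i x = TensorProduct.congr (s i) (LinearEquiv.refl ℤ (Fin 8 → ℤ)) x := by
    intro i x
    rw [hs_refl i]
    exact eq_rTensor_reflection_of_neg_on_span_of_id_on_orthogonal hsym (hα i) bE8
      (T i).toAddMonoidHom
      (fun x hx => hT1 i x (by simpa only [← SetLike.mem_coe, Submodule.coe_span_int] using hx))
      (fun x hx => hT2 i x fun m hm =>
        hx m (by simpa only [← SetLike.mem_coe, Submodule.coe_span_int] using hm)) x
  refine ⟨hT, ?_⟩
  have h_inj := (DistribMulAction.toModuleAut_injective ℤ (R ⊗[ℤ] (Fin 8 → ℤ))).comp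
    (LinearEquiv.rTensorMonoidHom_injective (K := ℤ) (M := R) (Fin 8 → ℤ))
  have hT_comp : T = (DistribMulAction.toModuleAut ℤ (R ⊗[ℤ] (Fin 8 → ℤ))).comp
      (LinearEquiv.rTensorMonoidHom (Fin 8 → ℤ)) ∘ s :=
    funext fun i => LinearEquiv.ext (hT i)
  subst hT_comp
  exact nonempty_closure_range_comp_mulEquiv _ h_inj s

/-- **SSD involutions of `R ⊗ E₈` and the Weyl group.**
Let `R` be an ADE root lattice (a free integral lattice) with positive roots
`α i`, reflections `s i = r_{α i}`, and for each `i` let `T i` be the involution of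
`R ⊗ E₈` which is `-1` on `M_{α i} = ℤα i ⊗ E₈` and `+1` on its orthogonal
complement (the SSD involution `t_{M_{α i}}`). Then `T i = r_{α i} ⊗ 1`, and the
group generated by the `T i` is isomorphic to the Weyl group of `R` (the group
generated by the reflections `r_{α i}`). -/
theorem ssd_involutions_generate_weyl_group
    {R : Type*} [AddCommGroup R] [Module ℤ R] [Module.Free ℤ R] [Module.Finite ℤ R]
    (bR : LinearMap.BilinForm ℤ R) (hsym : ∀ x y, bR x y = bR y x)
    {ι : Type*} (α : ι → R) (hα : ∀ i, bR (α i) (α i) = 2)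
    (s : ι → (R ≃ₗ[ℤ] R)) (hs : ∀ i x, s i x = x - bR (α i) x • α i)
    (T : ι → ((R ⊗[ℤ] (Fin 8 → ℤ)) ≃ₗ[ℤ] (R ⊗[ℤ] (Fin 8 → ℤ))))
    (hT1 : ∀ i, ∀ x ∈ Submodule.span ℤ (Set.range fun γ : Fin 8 → ℤ => α i ⊗ₜ[ℤ] γ),
      T i x = -x)
    (hT2 : ∀ i x,
      (∀ m ∈ Submodule.span ℤ (Set.range fun γ : Fin 8 → ℤ => α i ⊗ₜ[ℤ] γ),
        (@LinearMap.BilinForm.tmul _ _ _ _ _ _ _ _ _ _ _ (@smulCommClass_self ℤ R _ Module.toDistribMulAction.toMulAction)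
          (@IsScalarTower.left ℤ R _ Module.toDistribMulAction.toMulAction) _
          bR bE8) x m = 0) → T i x = x) :
    (∀ i x, T i x = TensorProduct.congr (s i) (LinearEquiv.refl ℤ (Fin 8 → ℤ)) x) ∧
    Nonempty ((Subgroup.closure (Set.range T)) ≃* (Subgroup.closure (Set.range s))) :=
  ssd_involutions_generate_weyl_group_general bR hsym α hα s hs T hT1 hT2
end

section
/- Let h be the Coxeter number of an ADE root lattice R. In the free real vector space with basis {e(α) : α ∈ Φ⁺(R)}, define a commutative bilinear product by e(α)·e(α) = 2e(α), e(α)·e(β) = (1/32)(e(α) + e(β) − e(α∓β)) when ⟨α,β⟩ = ±1 (where the index α∓β is replaced by its negative if it is a negative root), and e(α)·e(β) = 0 when ⟨α,β⟩ = 0. Then w = (32/(h+30)) Σ_{α∈Φ⁺(R)} e(α) satisfies w·w = 2w and w·e(α) = 2e(α) for all α ∈ Φ⁺(R). -/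
/-!
Every `e(α)` is an eigenvector of left multiplication by `s = Σ e(β)`: the term `β = α`
contributes `2 e(α)`, non-adjacent `β` contribute nothing, and each of the `2(h-2)` adjacent
`β` contributes `(e(α) + e(β) - e(σ(α,β)))/32`, where the `e(β)` and `e(σ(α,β))` cancel in
the sum because `σ(α, ·)` permutes the neighbours of `α`. Hence `s·e(α) = ((h+30)/16) e(α)`,
and rescaling `s` so that this eigenvalue becomes `2` gives `w`; then `w·w = 2w` by linearity.
-/

open Finset

namespace GriessAlgebra

variable {V ι : Type*} [AddCommGroup V] [Module ℝ V] [Fintype ι]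

theorem sum_mul_adj_eq_card_smul (e : ι → V) (mul : V →ₗ[ℝ] V →ₗ[ℝ] V)
    (hcomm : ∀ x y, mul x y = mul y x) (adj : ι → ι → Prop) (σ : ι → ι → ι)
    (hσ1 : ∀ a b, adj a b → adj a (σ a b)) (hσ2 : ∀ a b, adj a b → σ a (σ a b) = b)
    (hadj : ∀ a b, adj a b → mul (e a) (e b) = ((1 : ℝ) / 32) • (e a + e b - e (σ a b)))
    (a : ι) [DecidablePred (adj a)] :
    ∑ b ∈ univ.filter (adj a), mul (e b) (e a)
      = ((#(univ.filter (adj a)) : ℝ) / 32) • e a := by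
  have hmaps : ∀ b ∈ univ.filter (adj a), σ a b ∈ univ.filter (adj a) := by
    simpa using hσ1 a
  have hinv : ∀ b ∈ univ.filter (adj a), σ a (σ a b) = b := by
    simpa using hσ2 a
  have hperm : ∑ b ∈ univ.filter (adj a), e (σ a b) = ∑ b ∈ univ.filter (adj a), e b :=
    sum_nbij' (σ a) (σ a) hmaps hmaps hinv hinv fun _ _ => rfl
  calc ∑ b ∈ univ.filter (adj a), mul (e b) (e a)
      = ∑ b ∈ univ.filter (adj a), ((1 : ℝ) / 32) • (e a + e b - e (σ a b)) :=
        sum_congr rfl fun b hb => by rw [hcomm, hadj a b (mem_filter.1 hb).2]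
    _ = ((#(univ.filter (adj a)) : ℝ) / 32) • e a := by
        rw [← smul_sum, sum_sub_distrib, sum_add_distrib, hperm, add_sub_cancel_right,
          sum_const, ← Nat.cast_smul_eq_nsmul ℝ, smul_smul, one_div_mul_eq_div]

theorem sum_mul_eq_smul (e : ι → V) (mul : V →ₗ[ℝ] V →ₗ[ℝ] V)
    (hcomm : ∀ x y, mul x y = mul y x) (adj : ι → ι → Prop)
    (hsymm : ∀ a b, adj a b → adj b a) (hirr : ∀ a, ¬ adj a a) (σ : ι → ι → ι)
    (hσ1 : ∀ a b, adj a b → adj a (σ a b)) (hσ2 : ∀ a b, adj a b → σ a (σ a b) = b)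
    (hself : ∀ a, mul (e a) (e a) = (2 : ℝ) • e a)
    (hadj : ∀ a b, adj a b → mul (e a) (e b) = ((1 : ℝ) / 32) • (e a + e b - e (σ a b)))
    (hzero : ∀ a b, a ≠ b → ¬ adj a b → mul (e a) (e b) = 0) (a : ι) :
    mul (∑ b, e b) (e a) = (2 + (Nat.card {b // adj a b} : ℝ) / 32) • e a := by
  classical
  have hrest : ∑ b ∈ univ.erase a, mul (e b) (e a)
      = ∑ b ∈ univ.filter (adj a), mul (e b) (e a) := by
    rw [← sum_filter_add_sum_filter_not _ (adj a), add_eq_left.2]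
    · congr 1
      ext b
      simp only [mem_filter, mem_erase, mem_univ, and_true, true_and]
      refine and_iff_right_of_imp ?_
      rintro hb rfl
      exact hirr b hb
    · refine sum_eq_zero fun b hb => ?_
      simp only [mem_filter, mem_erase, mem_univ, and_true] at hb
      exact hzero b a hb.1 fun hba => hb.2 (hsymm b a hba)
  rw [map_sum, LinearMap.sum_apply, ← add_sum_erase _ _ (mem_univ a), hself, hrest,
    sum_mul_adj_eq_card_smul e mul hcomm adj σ hσ1 hσ2 hadj, ← add_smul,
    Nat.card_eq_fintype_card, Fintype.card_subtype]

theorem mul_smul_sum_of_mul_sum_eq_smul (e : ι → V) (mul : V →ₗ[ℝ] V →ₗ[ℝ] V) {c k : ℝ}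
    (hc : ∀ a, mul (∑ b, e b) (e a) = c • e a) (hkc : k * c = 2) :
    mul (k • ∑ b, e b) (k • ∑ b, e b) = (2 : ℝ) • (k • ∑ b, e b) ∧
      ∀ a, mul (k • ∑ b, e b) (e a) = (2 : ℝ) • e a := by
  have hw : ∀ a, mul (k • ∑ b, e b) (e a) = (2 : ℝ) • e a := fun a => by
    rw [map_smul, LinearMap.smul_apply, hc, smul_smul, hkc]
  refine ⟨?_, hw⟩
  rw [map_smul, map_sum, sum_congr rfl fun a _ => hw a, ← smul_sum, smul_comm]

end GriessAlgebra

open GriessAlgebra in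
/-- **The conformal vector is an idempotent of the Griess algebra `𝒢_R` (suitably
normalized).** Let `h` be the Coxeter number of an ADE root lattice `R`. In the
(free) real vector space `V` spanned by `{e(α) : α ∈ Φ⁺(R)}` (indexed by `ι`),
consider the commutative bilinear product with `e(α)·e(α) = 2e(α)`,
`e(α)·e(β) = (1/32)(e(α) + e(β) - e(σ(α,β)))` when `⟨α,β⟩ = ±1`
(`σ(α,β)` being the positive root `±(α∓β)`), and `e(α)·e(β) = 0` when `⟨α,β⟩ = 0`.
Here `adj α β` encodes `⟨α,β⟩ = ±1`; for fixed `α`, `β ↦ σ(α,β)` is an involution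
of the `2(h-2)` roots adjacent to `α`. Then `w = (32/(h+30)) Σ e(α)` satisfies
`w·w = 2w` and `w·e(α) = 2e(α)` for all `α`. -/
theorem conformal_vector_of_griess_algebra
    {V : Type*} [AddCommGroup V] [Module ℝ V]
    {ι : Type*} [Fintype ι]
    (h : ℕ) (hh : 2 ≤ h)
    (e : ι → V)
    (mul : V →ₗ[ℝ] V →ₗ[ℝ] V)
    (hcomm : ∀ x y, mul x y = mul y x)
    (adj : ι → ι → Prop)
    (hsymm : ∀ a b, adj a b → adj b a)
    (hirr : ∀ a, ¬ adj a a)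
    (σ : ι → ι → ι)
    (hσ1 : ∀ a b, adj a b → adj a (σ a b))
    (hσ2 : ∀ a b, adj a b → σ a (σ a b) = b)
    (hcount : ∀ a, Nat.card {b : ι // adj a b} = 2 * (h - 2))
    (hself : ∀ a, mul (e a) (e a) = (2 : ℝ) • e a)
    (hadj : ∀ a b, adj a b →
      mul (e a) (e b) = ((1 : ℝ) / 32) • (e a + e b - e (σ a b)))
    (hzero : ∀ a b, a ≠ b → ¬ adj a b → mul (e a) (e b) = 0) :
    mul (((32 : ℝ) / (h + 30)) • ∑ a, e a) (((32 : ℝ) / (h + 30)) • ∑ a, e a)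
        = (2 : ℝ) • (((32 : ℝ) / (h + 30)) • ∑ a, e a) ∧
    ∀ a, mul (((32 : ℝ) / (h + 30)) • ∑ b, e b) (e a) = (2 : ℝ) • e a := by
  have heigen : ∀ a, mul (∑ b, e b) (e a) = (((h : ℝ) + 30) / 16) • e a := fun a => by
    rw [sum_mul_eq_smul e mul hcomm adj hsymm hirr σ hσ1 hσ2 hself hadj hzero, hcount]
    push_cast [Nat.cast_sub hh]
    ring_nf
  exact mul_smul_sum_of_mul_sum_eq_smul e mul heigen (by field_simp; ring)
end
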